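/- arXiv:1512.07430 — 5 statements merged into one kernel-verified Lean document; each statement's English description precedes it below -/
import Mathlib

section
/- Let M = ⟨E, σ, τ, A⟩ be a FOLE structure with entity classification E = ⟨R, K, ⊨_E⟩ and typed domain A = ⟨X, Y, ⊨_A⟩, where σ(r) = ⟨I_r, s_r⟩ and τ(k) = ⟨J_k, t_k⟩. Define the key-embedding data: σ̇ : R → List(R + X) sending r to the signature on index type Unit + I_r given by inl(r) on the Unit summand and inr ∘ s_r on I_r; and τ̇ : K → List(K + Y) sending k to the tuple on index type Unit + J_k given by inl(k) on the Unit summand and inr ∘ t_k on J_k. Then Ṁ = ⟨E, σ̇, τ̇, E + A⟩ is a FOLE structure (i.e., ⟨σ̇, τ̇⟩ is a list designation E ⇉ List(E + A)), and moreover the signature map σ̇ and the tuple map τ̇ are injective. -/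
/-- A signature (or tuple): an index type together with a map into `X`. -/
structure SigL (X : Type) where
  I : Type
  s : I → X

/-- The list map `∑_f` post-composing with `f`. -/
def sumMap {X X' : Type} (f : X → X') (l : SigL X) : SigL X' :=
  ⟨l.I, f ∘ l.s⟩

/-- The list classification: a `Y`-tuple `t` is classified by an `X`-signature `s`
iff they have the same index type and, under this identification, the components
are classified componentwise. -/
def ListCls {X Y : Type} (A : Y → X → Prop) (t : SigL Y) (s : SigL X) : Prop :=
  ∃ h : t.I = s.I, ∀ i : t.I, A (t.s i) (s.s (cast h i))

/-- `⟨f, g⟩ : C₂ ⇄ C₁` is an infomorphism: `g(y₁) ⊨₂ x₂` iff `y₁ ⊨₁ f(x₂)`. -/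
def IsInfomorphism {X₂ Y₂ X₁ Y₁ : Type*} (C₂ : Y₂ → X₂ → Prop) (C₁ : Y₁ → X₁ → Prop)
    (f : X₂ → X₁) (g : Y₁ → Y₂) : Prop :=
  ∀ (x₂ : X₂) (y₁ : Y₁), C₂ (g y₁) x₂ ↔ C₁ y₁ (f x₂)

/-- The parallel sum `E + A` of two classifications. -/
def sumCls {R K X Y : Type} (E : K → R → Prop) (A : Y → X → Prop) :
    K ⊕ Y → R ⊕ X → Prop
  | Sum.inl k, Sum.inl r => E k r
  | Sum.inr y, Sum.inr x => A y x
  | _, _ => False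

/-- The designation condition making `⟨E, σ, τ, A⟩` a FOLE structure. -/
def IsStruc {R K X Y : Type} (E : K → R → Prop) (A : Y → X → Prop)
    (σ : R → SigL X) (τ : K → SigL Y) : Prop :=
  ∀ (k : K) (r : R), E k r → ListCls A (τ k) (σ r)

/-- The conditions making `⟨r, k, f, g⟩` a FOLE structure morphism `M₂ ⇄ M₁`. -/
def IsStrucMor {R₂ K₂ X₂ Y₂ R₁ K₁ X₁ Y₁ : Type}
    (E₂ : K₂ → R₂ → Prop) (A₂ : Y₂ → X₂ → Prop) (σ₂ : R₂ → SigL X₂) (τ₂ : K₂ → SigL Y₂)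
    (E₁ : K₁ → R₁ → Prop) (A₁ : Y₁ → X₁ → Prop) (σ₁ : R₁ → SigL X₁) (τ₁ : K₁ → SigL Y₁)
    (r : R₂ → R₁) (k : K₁ → K₂) (f : X₂ → X₁) (g : Y₁ → Y₂) : Prop :=
  IsInfomorphism A₂ A₁ f g ∧ IsInfomorphism E₂ E₁ r k ∧
  (∀ r₂ : R₂, σ₁ (r r₂) = sumMap f (σ₂ r₂)) ∧
  (∀ k₁ : K₁, τ₂ (k k₁) = sumMap g (τ₁ k₁))

/-- Key-embedding of a signature/tuple map: `r ↦ ⟨1, r⟩ + σ(r)`. -/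
def keySig {R X : Type} (σ : R → SigL X) (r : R) : SigL (R ⊕ X) :=
  ⟨Unit ⊕ (σ r).I, Sum.elim (fun _ => Sum.inl r) (Sum.inr ∘ (σ r).s)⟩


lemma auxDesig {R K X Y : Type} (E : K → R → Prop) (A : Y → X → Prop)
    {J I : Type} (s : I → X) (t : J → Y) (h : J = I)
    (hc : ∀ j, A (t j) (s (cast h j))) {k : K} {r : R} (hkr : E k r) :
    ListCls (sumCls E A)
      ⟨Unit ⊕ J, Sum.elim (fun _ => Sum.inl k) (Sum.inr ∘ t)⟩
      ⟨Unit ⊕ I, Sum.elim (fun _ => Sum.inl r) (Sum.inr ∘ s)⟩ := by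
  subst h
  refine ⟨rfl, fun i => ?_⟩
  cases i with
  | inl u => exact hkr
  | inr j => exact hc j

lemma auxInj {R X : Type} (σ : R → SigL X) : Function.Injective (keySig σ) := by
  intro r₁ r₂ h
  have hmem : Sum.inl r₂ ∈ Set.range (keySig σ r₁).s := by
    rw [h]; exact ⟨Sum.inl (), rfl⟩
  obtain ⟨i, hi⟩ := hmem
  cases i with
  | inl u => simp only [keySig, Sum.elim_inl] at hi; exact Sum.inl.inj hi
  | inr j => simp [keySig] at hi

/-- The key-embedding `Ṁ = ⟨E, σ̇, τ̇, E + A⟩` of a FOLE structure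
`M = ⟨E, σ, τ, A⟩` is a FOLE structure, and `σ̇`, `τ̇` are injective. -/
theorem stmt7 {R K X Y : Type} (E : K → R → Prop) (A : Y → X → Prop)
    (σ : R → SigL X) (τ : K → SigL Y) (hM : IsStruc E A σ τ) :
    IsStruc E (sumCls E A) (keySig σ) (keySig τ) ∧
    Function.Injective (keySig σ) ∧ Function.Injective (keySig τ) := by

  refine ⟨fun k r hkr => ?_, auxInj σ, auxInj τ⟩
  obtain ⟨h, hc⟩ := hM k r hkr
  exact auxDesig E A (σ r).s (τ k).s h hc hkr
end

section
/- Let ⟨r, k, f, g⟩ : M₂ ⇄ M₁ be a FOLE structure morphism between structures M₂ = ⟨E₂, σ₂, τ₂, A₂⟩ and M₁ = ⟨E₁, σ₁, τ₁, A₁⟩. Then the key-embedding data ⟨r, k, r + f, k + g⟩ is a FOLE structure morphism Ṁ₂ ⇄ Ṁ₁ between the companion key-embedding structures; that is: (i) ⟨r + f, k + g⟩ : E₂ + A₂ ⇄ E₁ + A₁ is an infomorphism of the parallel sum typed domains; (ii) ⟨r, k⟩ : E₂ ⇄ E₁ is an infomorphism; (iii) the schema condition σ̇₁(r(r₂)) =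 ∑_{r+f}(σ̇₂(r₂)) holds for all r₂ ∈ R₂; and (iv) the universe condition τ̇₂(k(k₁)) = ∑_{k+g}(τ̇₁(k₁)) holds for all k₁ ∈ K₁. -/
theorem keySig_eq {R₁ R₂ X₁ X₂ : Type} (r : R₂ → R₁) (a : R₁) (b : R₂)
    (f : X₂ → X₁) (σ₁ : R₁ → SigL X₁) (σ₂ : R₂ → SigL X₂)
    (h : σ₁ a = sumMap f (σ₂ b)) (ha : a = r b) :
    keySig σ₁ a = sumMap (Sum.map r f) (keySig σ₂ b) := by
  subst ha
  rcases hb : σ₂ b with ⟨I₂, s₂⟩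
  rw [hb] at h
  unfold keySig sumMap
  rw [h, hb]
  congr 1
  funext i
  cases i <;> rfl

/-- Any FOLE structure morphism `⟨r, k, f, g⟩ : M₂ ⇄ M₁` induces a
key-embedding structure morphism `⟨r, k, r + f, k + g⟩ : Ṁ₂ ⇄ Ṁ₁` between the
companion key-embedding structures. -/
theorem stmt9 {R₂ K₂ X₂ Y₂ R₁ K₁ X₁ Y₁ : Type}
    (E₂ : K₂ → R₂ → Prop) (A₂ : Y₂ → X₂ → Prop) (σ₂ : R₂ → SigL X₂) (τ₂ : K₂ → SigL Y₂)
    (E₁ : K₁ → R₁ → Prop) (A₁ : Y₁ → X₁ → Prop) (σ₁ : R₁ → SigL X₁) (τ₁ : K₁ → SigL Y₁)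
    (r : R₂ → R₁) (k : K₁ → K₂) (f : X₂ → X₁) (g : Y₁ → Y₂)
    (hM₂ : IsStruc E₂ A₂ σ₂ τ₂) (hM₁ : IsStruc E₁ A₁ σ₁ τ₁)
    (hmor : IsStrucMor E₂ A₂ σ₂ τ₂ E₁ A₁ σ₁ τ₁ r k f g) :
    IsStrucMor E₂ (sumCls E₂ A₂) (keySig σ₂) (keySig τ₂)
               E₁ (sumCls E₁ A₁) (keySig σ₁) (keySig τ₁)
               r k (Sum.map r f) (Sum.map k g) := by
  obtain ⟨hf, hr, hσ, hτ⟩ := hmor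
  refine ⟨?_, hr, ?_, ?_⟩
  · rintro (x | x) (y | y) <;> simp [sumCls, Sum.map] <;> [exact hr x y; exact hf x y]
  · intro r₂
    have h := keySig_eq r (r r₂) r₂ f σ₁ σ₂ (hσ r₂) rfl
    exact h
  · intro k₁
    exact keySig_eq k (k k₁) k₁ g τ₂ τ₁ (hτ k₁) rfl
end

section
/- Let ⟨r, f⟩ : S₂ ⇒ S₁ be a schema morphism between schemas S₂ = ⟨R₂, σ₂, X₂⟩ and S₁ = ⟨R₁, σ₁, X₁⟩ (so r : R₂ → R₁, f : X₂ → X₁ and σ₁(r(r₂)) = ∑_f(σ₂(r₂)) for all r₂), and let M₁ = ⟨E₁, σ₁, τ₁, A₁⟩ be a FOLE structure with schema S₁. Then the reduct struc^∧_{⟨r,f⟩}(M₁) := ⟨r⁻¹(E₁), σ₂, τ₁, f⁻¹(A₁)⟩ is a FOLE structure with schema S₂ (the designation condition holds), and ⟨r, 1_{K₁}, f, 1_{Y₁}⟩ is a structure morphism from struc^∧_{⟨r,f⟩}(M₁) to M₁. -/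
/-- Along a schema morphism `⟨r, f⟩ : S₂ ⇒ S₁`, the reduct
`struc^∧_{⟨r,f⟩}(M₁) = ⟨r⁻¹(E₁), σ₂, τ₁, f⁻¹(A₁)⟩` of a FOLE structure `M₁` with
schema `S₁` is a FOLE structure with schema `S₂`, and `⟨r, 1, f, 1⟩` is a
structure morphism from the reduct to `M₁`. -/
theorem stmt12 {R₂ X₂ R₁ X₁ K₁ Y₁ : Type}
    (σ₂ : R₂ → SigL X₂) (σ₁ : R₁ → SigL X₁) (r : R₂ → R₁) (f : X₂ → X₁)
    (hsch : ∀ r₂ : R₂, σ₁ (r r₂) = sumMap f (σ₂ r₂))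
    (E₁ : K₁ → R₁ → Prop) (A₁ : Y₁ → X₁ → Prop) (τ₁ : K₁ → SigL Y₁)
    (hM₁ : IsStruc E₁ A₁ σ₁ τ₁) :
    IsStruc (fun (k₁ : K₁) (r₂ : R₂) => E₁ k₁ (r r₂))
            (fun (y₁ : Y₁) (x₂ : X₂) => A₁ y₁ (f x₂)) σ₂ τ₁ ∧
    IsStrucMor (fun (k₁ : K₁) (r₂ : R₂) => E₁ k₁ (r r₂))
               (fun (y₁ : Y₁) (x₂ : X₂) => A₁ y₁ (f x₂)) σ₂ τ₁
               E₁ A₁ σ₁ τ₁ r id f id := by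
  constructor
  · intro k r₂ hk
    have key : ListCls A₁ (τ₁ k) (sumMap f (σ₂ r₂)) := hsch r₂ ▸ hM₁ k (r r₂) hk
    obtain ⟨h, hc⟩ := key
    exact ⟨h, hc⟩
  · exact ⟨fun _ _ => Iff.rfl, fun _ _ => Iff.rfl, hsch, fun k₁ => rfl⟩
end

section
/- Let ⟨k, g⟩ : U₂ ⇐ U₁ be a universe morphism between universes U₂ = ⟨K₂, τ₂, Y₂⟩ and U₁ = ⟨K₁, τ₁, Y₁⟩ (so k : K₁ → K₂, g : Y₁ → Y₂ and τ₂(k(k₁)) = ∑_g(τ₁(k₁)) for all k₁), and let M₂ = ⟨E₂, σ₂, τ₂, A₂⟩ be a FOLE structure with universe U₂. Then struc^∨_{⟨k,g⟩}(M₂) := ⟨k⁻¹(E₂), σ₂, τ₁, g⁻¹(A₂)⟩ is a FOLE structure with universe U₁ (the designation condition holds), and ⟨1_{R₂}, k, 1_{X₂}, g⟩ is a structure morphism from M₂ to struc^∨_{⟨k,g⟩}(M₂). -/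
/-- Along a universe morphism `⟨k, g⟩ : U₂ ⇐ U₁`, the image
`struc^∨_{⟨k,g⟩}(M₂) = ⟨k⁻¹(E₂), σ₂, τ₁, g⁻¹(A₂)⟩` of a FOLE structure `M₂` with
universe `U₂` is a FOLE structure with universe `U₁`, and `⟨1, k, 1, g⟩` is a
structure morphism from `M₂` to the image. -/
theorem stmt13 {K₂ Y₂ K₁ Y₁ R₂ X₂ : Type}
    (τ₂ : K₂ → SigL Y₂) (τ₁ : K₁ → SigL Y₁) (k : K₁ → K₂) (g : Y₁ → Y₂)
    (huniv : ∀ k₁ : K₁, τ₂ (k k₁) = sumMap g (τ₁ k₁))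
    (E₂ : K₂ → R₂ → Prop) (A₂ : Y₂ → X₂ → Prop) (σ₂ : R₂ → SigL X₂)
    (hM₂ : IsStruc E₂ A₂ σ₂ τ₂) :
    IsStruc (fun (k₁ : K₁) (r₂ : R₂) => E₂ (k k₁) r₂)
            (fun (y₁ : Y₁) (x₂ : X₂) => A₂ (g y₁) x₂) σ₂ τ₁ ∧
    IsStrucMor E₂ A₂ σ₂ τ₂
               (fun (k₁ : K₁) (r₂ : R₂) => E₂ (k k₁) r₂)
               (fun (y₁ : Y₁) (x₂ : X₂) => A₂ (g y₁) x₂) σ₂ τ₁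
               id k id g := by
  constructor
  · intro k₁ r₂ h
    have h2 := hM₂ (k k₁) r₂ h
    rw [huniv k₁] at h2
    obtain ⟨hI, hcomp⟩ := h2
    exact ⟨hI, fun i => hcomp i⟩
  · refine ⟨fun x y => Iff.rfl, fun r k₁ => Iff.rfl, fun r₂ => ?_, huniv⟩
    simp [sumMap, Function.id_comp]
end

section
/- Let ⟨r, k, f, g⟩ : M₂ ⇄ M₁ be a FOLE structure morphism and let N := struc^∧_{⟨r,f⟩}(M₁) = ⟨r⁻¹(E₁), σ₂, τ₁, f⁻¹(A₁)⟩ be the schema-oriented reduct. Then ⟨r, k, f, g⟩ factors dually through N: (i) ⟨1_{R₂}, k, 1_{X₂}, g⟩ : M₂ ⇄ N is a structure morphism over the fixed schema S₂ = ⟨R₂, σ₂, X₂⟩; (ii) ⟨r, 1_{K₁}, f, 1_{Y₁}⟩ : N ⇄ M₁ is a structure morphism over the fixed universe U₁ = ⟨K₁, τ₁, Y₁⟩; and (iii) the component-wise composite of these two morphisms (type components composed forwards, instance components backwards) equals ⟨r, k, f, g⟩. -/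
/-- Any FOLE structure morphism `⟨r, k, f, g⟩ : M₂ ⇄ M₁` factors
dually through the schema-oriented reduct `N = struc^∧_{⟨r,f⟩}(M₁)`:
`⟨1, k, 1, g⟩ : M₂ ⇄ N` over the fixed schema `S₂`, `⟨r, 1, f, 1⟩ : N ⇄ M₁`
over the fixed universe `U₁`, and their component-wise composite equals
`⟨r, k, f, g⟩`. -/
theorem stmt15 {R₂ K₂ X₂ Y₂ R₁ K₁ X₁ Y₁ : Type}
    (E₂ : K₂ → R₂ → Prop) (A₂ : Y₂ → X₂ → Prop) (σ₂ : R₂ → SigL X₂) (τ₂ : K₂ → SigL Y₂)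
    (E₁ : K₁ → R₁ → Prop) (A₁ : Y₁ → X₁ → Prop) (σ₁ : R₁ → SigL X₁) (τ₁ : K₁ → SigL Y₁)
    (r : R₂ → R₁) (k : K₁ → K₂) (f : X₂ → X₁) (g : Y₁ → Y₂)
    (hM₂ : IsStruc E₂ A₂ σ₂ τ₂) (hM₁ : IsStruc E₁ A₁ σ₁ τ₁)
    (hmor : IsStrucMor E₂ A₂ σ₂ τ₂ E₁ A₁ σ₁ τ₁ r k f g) :
    IsStrucMor E₂ A₂ σ₂ τ₂
               (fun (k₁ : K₁) (r₂ : R₂) => E₁ k₁ (r r₂))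
               (fun (y₁ : Y₁) (x₂ : X₂) => A₁ y₁ (f x₂)) σ₂ τ₁
               id k id g ∧
    IsStrucMor (fun (k₁ : K₁) (r₂ : R₂) => E₁ k₁ (r r₂))
               (fun (y₁ : Y₁) (x₂ : X₂) => A₁ y₁ (f x₂)) σ₂ τ₁
               E₁ A₁ σ₁ τ₁ r id f id ∧
    (r ∘ id = r) ∧ (k ∘ id = k) ∧ (f ∘ id = f) ∧ (g ∘ id = g) := by
  obtain ⟨hA, hE, hσ, hτ⟩ := hmor
  refine ⟨⟨fun x₂ y₁ => (hA x₂ y₁), fun r₂ k₁ => (hE r₂ k₁), fun r₂ => rfl, hτ⟩,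
    ⟨fun x₂ y₁ => Iff.rfl, fun r₂ k₁ => Iff.rfl, hσ, fun k₁ => rfl⟩, rfl, rfl, rfl, rfl⟩
end
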